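/- Let η be a left-invariant 1-form on a Lie group N with Lie algebra n. Then dη(X,Y) = -η([X,Y]) for all X, Y ∈ n. Consequently, if (g, ξᵢ, ηᵢ, φᵢ) is a left-invariant degenerate 3-(α,δ)-Sasakian structure on N (dηᵢ = 2αΦᵢ^H, α ≠ 0), then the center of n is contained in the vertical subspace V = span(ξ₁,ξ₂,ξ₃). -/
import Mathlib


/-- For a left-invariant 1-form `η` on a Lie group `N` with Lie algebra
`n`, the Maurer–Cartan formula gives `dη(X,Y) = -η(⁅X,Y⁆)` for `X, Y ∈ n`. Consequently,
if `(g, ξᵢ, ηᵢ, φᵢ)` is a left-invariant degenerate 3-(α,δ)-Sasakian structure on `N`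
(`dηᵢ = 2α Φᵢ^H`, `α ≠ 0`), then the center of `n` is contained in the vertical subspace
`V = span(ξ₁, ξ₂, ξ₃)`.
Formalized at the Lie algebra level: `B` is the (positive definite, symmetric) metric on
`n`, the `ξ i` are `B`-orthonormal, `η i = B(·, ξ i)`, `H` is the `B`-orthogonal
complement of `V` with projection `πH`, `φ i` preserves `H` with `φᵢ² = -id` there, `dη i`
is given by the Maurer–Cartan formula, and equals `2α Φᵢ^H`. -/
theorem left_invariant_degenerate_center_is_vertical
    {n : Type*} [LieRing n] [LieAlgebra ℝ n] [Module.Finite ℝ n]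
    (B : LinearMap.BilinForm ℝ n)
    (hsymm : ∀ x y : n, B x y = B y x)
    (hposdef : ∀ x : n, x ≠ 0 → 0 < B x x)
    (α : ℝ) (hα : α ≠ 0)
    (ξ : Fin 3 → n) (hξ : ∀ i j, B (ξ i) (ξ j) = if i = j then 1 else 0)
    (η : Fin 3 → (n →ₗ[ℝ] ℝ)) (hη : ∀ i, ∀ X : n, η i X = B X (ξ i))
    (V H : Submodule ℝ n) (hV : V = Submodule.span ℝ (Set.range ξ))
    (hcompl : IsCompl H V) (horth : ∀ x ∈ H, ∀ i, B x (ξ i) = 0)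
    (πH : n →ₗ[ℝ] n) (hπ : ∀ x : n, πH x ∈ H ∧ x - πH x ∈ V)
    (φ : Fin 3 → (n →ₗ[ℝ] n))
    (hφH : ∀ i, ∀ x ∈ H, φ i x ∈ H)
    (hφ2 : ∀ i, ∀ x ∈ H, φ i (φ i x) = -x)
    (dEta : Fin 3 → n → n → ℝ)
    (hMC : ∀ i, ∀ X Y : n, dEta i X Y = -(η i ⁅X, Y⁆))
    (hstruct : ∀ i, ∀ X Y : n, dEta i X Y = 2 * α * B (πH X) (φ i (πH Y))) :
    ∀ X ∈ LieAlgebra.center ℝ n, X ∈ V := by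
  intro X hX
  -- πH is the identity on H
  have hπid : ∀ x ∈ H, πH x = x := by
    intro x hx
    have h1 : x - πH x ∈ H := Submodule.sub_mem H hx (hπ x).1
    have h2 : x - πH x ∈ V := (hπ x).2
    have : x - πH x = 0 := by
      have := hcompl.inf_eq_bot
      have hmem : x - πH x ∈ H ⊓ V := ⟨h1, h2⟩
      rw [this] at hmem
      simpa using hmem
    have := sub_eq_zero.mp this
    exact this.symm
  -- X is central: all brackets vanish
  have hbr : ∀ Y : n, ⁅X, Y⁆ = 0 := by
    intro Y
    have h := hX Y
    rw [← lie_skew, h, neg_zero]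
  -- plug Y = φ 0 (πH X)
  set Z := πH X with hZ
  have hZH : Z ∈ H := (hπ X).1
  have hY : φ 0 Z ∈ H := hφH 0 Z hZH
  have key : dEta 0 X (φ 0 Z) = 0 := by
    rw [hMC, hbr]
    simp
  have := hstruct 0 X (φ 0 Z)
  rw [key, hπid _ hY, hφ2 0 Z hZH] at this
  have hBZ : B Z Z = 0 := by
    have h2 : 2 * α * B Z (-Z) = 0 := this.symm
    have : B Z (-Z) = 0 := by
      rcases mul_eq_zero.mp h2 with h | h
      · exact absurd h (by simpa using hα)
      · exact h
    simpa using this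
  have hZ0 : Z = 0 := by
    by_contra hne
    exact absurd hBZ (ne_of_gt (hposdef Z hne))
  have : X - πH X ∈ V := (hπ X).2
  rwa [← hZ, hZ0, sub_zero] at this
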